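/- For a repeated string S in T, the number of net occurrences of S (occurrences (i,j) with f(T[i-1..j]) = 1 and f(T[i..j+1]) = 1, boundary conventions applying) is well-defined via extensions: distinct net occurrences of S have distinct pairs of (left character, right character) extensions, so the map from net occurrences to pairs (x,y) with f(xS)=f(Sy)=f(xSy)=1 is a bijection. -/

import Mathlib

variable {α : Type*} [DecidableEq α]

/-- Number of occurrences of `S` as a substring of `T`. -/
def occ (T S : List α) : ℕ :=
  ((Finset.range T.length).filter (fun i => S <+: T.drop i)).card

/-- Net occurrence (with boundary conventions at the ends of the text). -/
def IsNetOcc (T S : List α) (i : ℕ) : Prop :=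
  S <+: T.drop i ∧ i + S.length ≤ T.length ∧ 2 ≤ occ T S ∧
    (i = 0 ∨ occ T ((T.drop (i - 1)).take (S.length + 1)) = 1) ∧
    (i + S.length = T.length ∨ occ T ((T.drop i).take (S.length + 1)) = 1)

/-!
The sentinels occur only at the ends of the text, so a repeated `S` contains neither of them and
each net occurrence `i` of `S` has neighbours `x = T[i-1]` and `y = T[i+|S|]`. For such an
interior occurrence the net conditions say exactly that `xS` and `Sy` occur once; then `xSy`
occurs exactly once, at `i - 1`, so `(x, y)` determines `i`. Conversely, for an admissible pair
the unique occurrence of `xSy` carries a net occurrence of `S` right after its `x`.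
-/

namespace List

theorem lt_length_of_prefix_drop {α : Type*} {T S : List α} {i : ℕ} (hS : S ≠ [])
    (h : S <+: T.drop i) : i < T.length := by
  by_contra hi
  rw [drop_eq_nil_of_le (not_lt.mp hi), prefix_nil] at h
  exact hS h

theorem cons_prefix_drop_iff {α : Type*} {T S : List α} {x : α} {j : ℕ} :
    x :: S <+: T.drop j ↔ T[j]? = some x ∧ S <+: T.drop (j + 1) := by
  rcases lt_or_ge j T.length with hj | hj
  · rw [drop_eq_getElem_cons hj, cons_prefix_cons, getElem?_eq_getElem hj, Option.some_inj,
      eq_comm]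
  · simp [drop_eq_nil_of_le hj, getElem?_eq_none hj]

theorem append_singleton_prefix_drop_iff {α : Type*} {T S : List α} {y : α} {j : ℕ} :
    S ++ [y] <+: T.drop j ↔ S <+: T.drop j ∧ T[j + S.length]? = some y := by
  induction S generalizing j with
  | nil => simp [cons_prefix_drop_iff]
  | cons s S ih =>
    simp only [cons_append, cons_prefix_drop_iff, ih, length_cons, and_assoc,
      Nat.add_right_comm j 1, Nat.add_assoc]

theorem cons_append_singleton_prefix_drop_iff {α : Type*} {T S : List α} {x y : α} {j : ℕ} :
    x :: (S ++ [y]) <+: T.drop j ↔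
      T[j]? = some x ∧ S <+: T.drop (j + 1) ∧ T[j + 1 + S.length]? = some y := by
  rw [cons_prefix_drop_iff, append_singleton_prefix_drop_iff]

theorem eq_zero_of_getElem?_cons_eq_self {α : Type*} {L : List α} {a : α} {p : ℕ}
    (ha : a ∉ L) (h : (a :: L)[p]? = some a) : p = 0 := by
  cases p with
  | zero => rfl
  | succ k => exact absurd (mem_of_getElem? (by simpa using h)) ha

theorem eq_length_of_getElem?_concat_eq_self {α : Type*} {L : List α} {b : α} {p : ℕ}
    (hb : b ∉ L) (h : (L ++ [b])[p]? = some b) : p = L.length := by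
  rcases lt_trichotomy p L.length with hp | hp | hp
  · rw [getElem?_append_left hp] at h
    exact absurd (mem_of_getElem? h) hb
  · exact hp
  · simp [getElem?_eq_none (show (L ++ [b]).length ≤ p by simpa)] at h

end List

open List

theorem occ_pos {T S : List α} {i : ℕ} (hS : S ≠ []) (h : S <+: T.drop i) : 0 < occ T S :=
  Finset.card_pos.mpr
    ⟨i, Finset.mem_filter.mpr ⟨Finset.mem_range.mpr (lt_length_of_prefix_drop hS h), h⟩⟩

theorem exists_prefix_drop_of_occ_pos {T S : List α} (h : 0 < occ T S) :
    ∃ i, S <+: T.drop i := by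
  obtain ⟨i, hi⟩ := Finset.card_pos.mp h
  exact ⟨i, (Finset.mem_filter.mp hi).2⟩

theorem eq_of_occ_eq_one {T S : List α} {i j : ℕ} (hS : S ≠ []) (h : occ T S = 1)
    (hi : S <+: T.drop i) (hj : S <+: T.drop j) : i = j :=
  Finset.card_le_one.mp h.le i
    (Finset.mem_filter.mpr ⟨Finset.mem_range.mpr (lt_length_of_prefix_drop hS hi), hi⟩) j
    (Finset.mem_filter.mpr ⟨Finset.mem_range.mpr (lt_length_of_prefix_drop hS hj), hj⟩)

theorem occ_le_occ_of_prefix {T A B : List α} (h : A <+: B) : occ T B ≤ occ T A :=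
  Finset.card_le_card fun _ hi =>
    Finset.mem_filter.mpr ⟨(Finset.mem_filter.mp hi).1, h.trans (Finset.mem_filter.mp hi).2⟩

theorem occ_eq_one_of_prefix {T A B : List α} {i : ℕ} (hAB : A <+: B) (hA : occ T A = 1)
    (hB : B ≠ []) (hBi : B <+: T.drop i) : occ T B = 1 :=
  le_antisymm (hA ▸ occ_le_occ_of_prefix hAB) (occ_pos hB hBi)

theorem occ_le_one_of_mem {T S : List α} {a : α} (haS : a ∈ S)
    (hpin : ∀ p q : ℕ, T[p]? = some a → T[q]? = some a → p = q) : occ T S ≤ 1 := by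
  obtain ⟨k, hk, rfl⟩ := mem_iff_getElem.mp haS
  refine Finset.card_le_one.mpr fun i hi j hj => ?_
  have hat : ∀ {i}, S <+: T.drop i → T[i + k]? = some S[k] := fun h => by
    rw [← getElem?_drop]; exact prefix_iff_getElem?.mp h k hk
  have := hpin _ _ (hat (Finset.mem_filter.mp hi).2) (hat (Finset.mem_filter.mp hj).2)
  omega

theorem IsNetOcc.pos_of_cons {L S : List α} {a : α} {i : ℕ} (ha : a ∉ L) (hS : S ≠ [])
    (h : IsNetOcc (a :: L) S i) : 0 < i := by
  obtain ⟨hSi, -, hrep, -⟩ := h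
  refine Nat.pos_of_ne_zero fun hi => ?_
  subst hi
  have haS : a ∈ S := by
    obtain ⟨s, S, rfl⟩ := exists_cons_of_ne_nil hS
    obtain ⟨rfl, -⟩ := cons_prefix_cons.mp hSi
    exact mem_cons_self
  have := occ_le_one_of_mem haS fun p q hp hq =>
    (eq_zero_of_getElem?_cons_eq_self ha hp).trans (eq_zero_of_getElem?_cons_eq_self ha hq).symm
  omega

theorem IsNetOcc.lt_of_concat {L S : List α} {b : α} {i : ℕ} (hb : b ∉ L) (hS : S ≠ [])
    (h : IsNetOcc (L ++ [b]) S i) : i + S.length < L.length + 1 := by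
  obtain ⟨hSi, hlen, hrep, -⟩ := h
  rw [length_append, length_singleton] at hlen
  refine lt_of_le_of_ne hlen fun hend => ?_
  have hiL : i ≤ L.length := by
    have := length_pos_iff.mpr hS
    omega
  have hbS : b ∈ S := by
    rw [hSi.eq_of_length (by simp; omega), drop_append_of_le_length hiL]
    exact mem_append_right _ (mem_singleton_self b)
  have := occ_le_one_of_mem hbS fun p q hp hq =>
    (eq_length_of_getElem?_concat_eq_self hb hp).trans
      (eq_length_of_getElem?_concat_eq_self hb hq).symm
  omega

theorem isNetOcc_succ_iff {T S : List α} {j : ℕ} {x y : α} (hx : T[j]? = some x)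
    (hy : T[j + 1 + S.length]? = some y) :
    IsNetOcc T S (j + 1) ↔
      S <+: T.drop (j + 1) ∧ 2 ≤ occ T S ∧ occ T (x :: S) = 1 ∧ occ T (S ++ [y]) = 1 := by
  have hlt : j + 1 + S.length < T.length := (List.getElem?_eq_some_iff.mp hy).1
  have htake : S <+: T.drop (j + 1) →
      (T.drop j).take (S.length + 1) = x :: S ∧
        (T.drop (j + 1)).take (S.length + 1) = S ++ [y] := fun hS =>
    ⟨(prefix_iff_eq_take.mp (cons_prefix_drop_iff.mpr ⟨hx, hS⟩)).symm,
      by simpa using (prefix_iff_eq_take.mp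
        (append_singleton_prefix_drop_iff.mpr ⟨hS, hy⟩)).symm⟩
  simp only [IsNetOcc, Nat.add_sub_cancel, Nat.add_one_ne_zero, false_or, hlt.ne, hlt.le,
    true_and]
  constructor
  · rintro ⟨hS, hrep, hl, hr⟩
    rw [(htake hS).1] at hl
    rw [(htake hS).2] at hr
    exact ⟨hS, hrep, hl, hr⟩
  · rintro ⟨hS, hrep, hl, hr⟩
    rw [(htake hS).1, (htake hS).2]
    exact ⟨hS, hrep, hl, hr⟩

theorem IsNetOcc.exists_eq_succ {T₀ S : List α} {s₀ s₁ : α} {i : ℕ} (h₀ : s₀ ∉ T₀)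
    (h₁ : s₁ ∉ T₀) (hss : s₀ ≠ s₁) (hS : S ≠ []) (h : IsNetOcc (s₀ :: (T₀ ++ [s₁])) S i) :
    ∃ j x y, i = j + 1 ∧ (s₀ :: (T₀ ++ [s₁]))[j]? = some x ∧
      (s₀ :: (T₀ ++ [s₁]))[j + 1 + S.length]? = some y := by
  have hpos : 0 < i := h.pos_of_cons (by simp [h₀, hss]) hS
  have hlt : i + S.length < T₀.length + 2 :=
    IsNetOcc.lt_of_concat (L := s₀ :: T₀) (by simp [h₁, hss.symm]) hS h
  obtain ⟨j, rfl⟩ := Nat.exists_eq_add_one_of_ne_zero hpos.ne'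
  exact ⟨j, _, _, rfl, getElem?_eq_getElem (by simp; omega), getElem?_eq_getElem (by simp; omega)⟩

/-- With sentinels prepended and appended to the text, the map sending a net occurrence `i`
of a repeated string `S` to the pair of its left and right extension characters
`(T[i-1], T[i+|S|])` is a bijection from the set of net occurrences of `S` onto the set of
pairs `(x, y)` with `f(xS) = f(Sy) = f(xSy) = 1`. -/
theorem netOcc_bijOn_pairs (T₀ : List α) (s₀ s₁ : α)
    (h₀ : s₀ ∉ T₀) (h₁ : s₁ ∉ T₀) (hss : s₀ ≠ s₁)
    (T : List α) (hT : T = s₀ :: (T₀ ++ [s₁]))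
    (S : List α) (hS : S ≠ []) (hrep : 2 ≤ occ T S) :
    Set.BijOn (fun i => (T.getD (i - 1) s₀, T.getD (i + S.length) s₁))
      {i | IsNetOcc T S i}
      {p : α × α | occ T (p.1 :: S) = 1 ∧ occ T (S ++ [p.2]) = 1 ∧
        occ T (p.1 :: (S ++ [p.2])) = 1} := by
  have interior : ∀ i, IsNetOcc T S i → ∃ j x y, i = j + 1 ∧ T[j]? = some x ∧
      T[j + 1 + S.length]? = some y := fun i hi => by
    subst hT
    exact hi.exists_eq_succ h₀ h₁ hss hS
  have value : ∀ {j x y}, T[j]? = some x → T[j + 1 + S.length]? = some y →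
      (T.getD (j + 1 - 1) s₀, T.getD (j + 1 + S.length) s₁) = (x, y) := fun hx hy => by
    simp [getD_eq_getElem?_getD, hx, hy]
  refine ⟨?_, ?_, ?_⟩
  · intro i hi
    obtain ⟨j, x, y, rfl, hx, hy⟩ := interior i hi
    obtain ⟨hSj, -, hxS, hSy⟩ := (isNetOcc_succ_iff hx hy).mp hi
    simp only [Set.mem_ofPred_eq, value hx hy]
    exact ⟨hxS, hSy, occ_eq_one_of_prefix (cons_prefix_cons.mpr ⟨rfl, prefix_append S [y]⟩) hxS
      (cons_ne_nil _ _) (cons_append_singleton_prefix_drop_iff.mpr ⟨hx, hSj, hy⟩)⟩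
  · intro i hi i' hi' heq
    obtain ⟨j, x, y, rfl, hx, hy⟩ := interior i hi
    obtain ⟨j', x', y', rfl, hx', hy'⟩ := interior i' hi'
    obtain ⟨rfl, -⟩ := Prod.mk.inj ((value hx hy).symm.trans (heq.trans (value hx' hy')))
    obtain ⟨hSj, -, hxS, -⟩ := (isNetOcc_succ_iff hx hy).mp hi
    obtain ⟨hSj', -⟩ := (isNetOcc_succ_iff hx' hy').mp hi'
    rw [eq_of_occ_eq_one (cons_ne_nil _ _) hxS (cons_prefix_drop_iff.mpr ⟨hx, hSj⟩)
      (cons_prefix_drop_iff.mpr ⟨hx', hSj'⟩)]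
  · rintro ⟨x, y⟩ ⟨hxS, hSy, hxSy⟩
    obtain ⟨j, hj⟩ := exists_prefix_drop_of_occ_pos (hxSy ▸ Nat.one_pos)
    obtain ⟨hx, hSj, hy⟩ := cons_append_singleton_prefix_drop_iff.mp hj
    exact ⟨j + 1, (isNetOcc_succ_iff hx hy).mpr ⟨hSj, hrep, hxS, hSy⟩, value hx hy⟩
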